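/- Fix q, p ∈ (0,1) and an integer k ≥ 1, and let x_1,…,x_k be i.i.d. Bernoulli(q) with sample mean x̄_k = (1/k)Σ_{i=1}^k x_i. Then for every δ ∈ (0,1), with probability at least 1 − δ: |KL(x̄_k ‖ p) − KL(q ‖ p)| ≤ (√(q(1−q)·KL(q‖p))/m(p,q))·√(log(4/δ)/k) + (1 + √(2·KL(q‖p))/m(p,q))·(log(4/δ)/k), where m(p,q) = min{p(1−p), q(1−q)}. -/

import Mathlib

open MeasureTheory ProbabilityTheory
open scoped ENNReal

/-- Bernoulli distribution on `ℝ` with mean `p`. -/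
noncomputable def bern (p : ℝ) : Measure ℝ :=
  ENNReal.ofReal p • Measure.dirac 1 + ENNReal.ofReal (1 - p) • Measure.dirac 0

/-- Real-valued Bernoulli KL divergence (with `0 * log 0 = 0`). -/
noncomputable def klBer (q p : ℝ) : ℝ :=
  q * Real.log (q / p) + (1 - q) * Real.log ((1 - q) / (1 - p))

open Real Set

/-! Write `y` for the sample mean and `r = log (4 / δ) / k`. The identity
`KL(y‖p) - KL(q‖p) = KL(y‖q) + (y - q) (logit q - logit p)` reduces the claim to a
deterministic estimate on the event `KL(y‖q) ≤ r`. On that event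
`|y - q| ≤ √(2 q (1 - q) r) + 2 r`, because `KL(·‖q)` has second derivative
`1 / (s (1 - s))`, which gives `(y - q)² ≤ 2 (q (1 - q) + |y - q|) KL(y‖q)`; the mean value
theorem gives `|logit q - logit p| ≤ |q - p| / m(p, q)`, and Pinsker's inequality bounds
`|q - p|` by `√(KL(q‖p) / 2)`. The event fails with probability at most
`2 exp (-k r) = δ / 2`: on each side of `q`, apply the Chernoff bound at the point where
`KL(·‖q)` reaches `r`. -/

lemma le_of_mul_sub_hasDerivAt_nonneg {f f' : ℝ → ℝ} {a x : ℝ}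
    (hf : ContinuousOn f (uIcc a x)) (hderiv : ∀ s ∈ uIoo a x, HasDerivAt f (f' s) s)
    (hsign : ∀ s ∈ uIoo a x, 0 ≤ (s - a) * f' s) :
    f a ≤ f x := by
  rcases lt_trichotomy a x with hax | rfl | hax
  · rw [uIcc_of_lt hax] at hf
    rw [uIoo_of_lt hax] at hderiv hsign
    obtain ⟨c, hc, hslope⟩ := exists_hasDerivAt_eq_slope f f' hax hf hderiv
    have hc' : 0 ≤ f' c := by nlinarith [hsign c hc, hc.1]
    rw [hslope, le_div_iff₀ (sub_pos.2 hax)] at hc'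
    linarith
  · rfl
  · rw [uIcc_of_gt hax] at hf
    rw [uIoo_of_gt hax] at hderiv hsign
    obtain ⟨c, hc, hslope⟩ := exists_hasDerivAt_eq_slope f f' hax hf hderiv
    have hc' : f' c ≤ 0 := by nlinarith [hsign c hc, hc.2]
    rw [hslope, div_le_iff₀ (sub_pos.2 hax)] at hc'
    linarith

noncomputable def logit (x : ℝ) : ℝ := log x - log (1 - x)

lemma hasDerivAt_logit {x : ℝ} (hx : x ∈ Ioo (0 : ℝ) 1) :
    HasDerivAt logit (x * (1 - x))⁻¹ x := by
  have hx0 : x ≠ 0 := hx.1.ne'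
  have hx1 : 1 - x ≠ 0 := by linarith [hx.2]
  have h : HasDerivAt logit (x⁻¹ - -1 / (1 - x)) x :=
    (hasDerivAt_log hx0).sub (((hasDerivAt_id' x).const_sub 1).log hx1)
  refine h.congr_deriv ?_
  field_simp
  ring

lemma exists_logit_sub_eq {a b : ℝ} (ha : a ∈ Ioo (0 : ℝ) 1) (hb : b ∈ Ioo (0 : ℝ) 1) :
    ∃ c ∈ uIcc a b, logit b - logit a = (b - a) / (c * (1 - c)) := by
  wlog hab : a < b generalizing a b
  · rcases (not_lt.1 hab).eq_or_lt with rfl | hba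
    · exact ⟨_, left_mem_uIcc, by simp⟩
    obtain ⟨c, hc, h⟩ := this hb ha hba
    refine ⟨c, uIcc_comm a b ▸ hc, ?_⟩
    rw [← neg_sub, h, ← neg_div, neg_sub]
  have hsub : Icc a b ⊆ Ioo 0 1 := uIcc_of_lt hab ▸ ordConnected_Ioo.uIcc_subset ha hb
  obtain ⟨c, hc, hderiv⟩ := exists_hasDerivAt_eq_slope logit _ hab
    (fun s hs => (hasDerivAt_logit (hsub hs)).continuousAt.continuousWithinAt)
    fun c hc => hasDerivAt_logit (hsub (Ioo_subset_Icc_self hc))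
  refine ⟨c, uIcc_of_lt hab ▸ Ioo_subset_Icc_self hc, ?_⟩
  rw [div_eq_mul_inv, hderiv, mul_div_cancel₀ _ (sub_ne_zero.2 hab.ne')]

lemma min_le_mul_one_sub_of_mem_uIcc {a b c : ℝ} (hc : c ∈ uIcc a b) :
    min (a * (1 - a)) (b * (1 - b)) ≤ c * (1 - c) := by
  wlog hab : a ≤ b generalizing a b
  · rw [min_comm]
    exact this (uIcc_comm a b ▸ hc) (le_of_not_ge hab)
  rw [uIcc_of_le hab] at hc
  rcases le_total (a + c) 1 with h | h
  · exact (min_le_left _ _).trans (by nlinarith [hc.1])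
  · exact (min_le_right _ _).trans (by nlinarith [hc.2])

lemma abs_logit_sub_le {p q : ℝ} (hp : p ∈ Ioo (0 : ℝ) 1) (hq : q ∈ Ioo (0 : ℝ) 1) :
    |logit q - logit p| ≤ |q - p| / min (p * (1 - p)) (q * (1 - q)) := by
  obtain ⟨c, hc, hpq⟩ := exists_logit_sub_eq hp hq
  have hm : 0 < min (p * (1 - p)) (q * (1 - q)) :=
    lt_min (mul_pos hp.1 (by linarith [hp.2])) (mul_pos hq.1 (by linarith [hq.2]))
  have hmc := min_le_mul_one_sub_of_mem_uIcc hc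
  rw [hpq, abs_div, abs_of_pos (hm.trans_le hmc)]
  exact div_le_div_of_nonneg_left (abs_nonneg _) hm hmc

lemma logit_strictMonoOn : StrictMonoOn logit (Ioo (0 : ℝ) 1) := by
  intro a ha b hb hab
  obtain ⟨c, hc, h⟩ := exists_logit_sub_eq ha hb
  have hc01 : c ∈ Ioo (0 : ℝ) 1 := ordConnected_Ioo.uIcc_subset ha hb hc
  have : 0 < (b - a) / (c * (1 - c)) :=
    div_pos (sub_pos.2 hab) (mul_pos hc01.1 (by linarith [hc01.2]))
  linarith

lemma mul_log_div_eq (x : ℝ) {y : ℝ} (hy : y ≠ 0) :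
    x * log (x / y) = x * log x - x * log y := by
  rcases eq_or_ne x 0 with rfl | hx
  · simp
  · rw [log_div hx hy, mul_sub]

lemma klBer_eq {q : ℝ} (x : ℝ) (hq0 : q ≠ 0) (hq1 : q ≠ 1) :
    klBer x q = -binEntropy x - (x * log q + (1 - x) * log (1 - q)) := by
  rw [klBer, binEntropy, mul_log_div_eq _ hq0, mul_log_div_eq _ (sub_ne_zero.2 hq1.symm),
    log_inv, log_inv]
  ring

lemma klBer_self (q : ℝ) : klBer q q = 0 := by
  simp [klBer]

lemma continuous_klBer_left {q : ℝ} (hq0 : q ≠ 0) (hq1 : q ≠ 1) :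
    Continuous (klBer · q) := by
  simp_rw [fun x => klBer_eq x hq0 hq1]
  fun_prop

lemma hasDerivAt_klBer_left {q x : ℝ} (hq0 : q ≠ 0) (hq1 : q ≠ 1)
    (hx : x ∈ Ioo (0 : ℝ) 1) :
    HasDerivAt (klBer · q) (logit x - logit q) x := by
  have h : HasDerivAt (fun y => -binEntropy y - (y * log q + (1 - y) * log (1 - q)))
      (-(log (1 - x) - log x) - (1 * log q + -1 * log (1 - q))) x :=
    (hasDerivAt_binEntropy hx.1.ne' hx.2.ne).neg.sub
      (((hasDerivAt_id' x).mul_const (log q)).add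
        (((hasDerivAt_id' x).const_sub 1).mul_const (log (1 - q))))
  rw [show (klBer · q) = _ from funext fun y => klBer_eq y hq0 hq1]
  refine h.congr_deriv ?_
  rw [logit, logit]
  ring

lemma klBer_monotoneOn {q : ℝ} (hq : q ∈ Ioo (0 : ℝ) 1) :
    MonotoneOn (klBer · q) (Icc q 1) := by
  refine monotoneOn_of_hasDerivWithinAt_nonneg (f' := fun s => logit s - logit q)
    (convex_Icc q 1)
    (continuous_klBer_left hq.1.ne' hq.2.ne).continuousOn (fun s hs => ?_) fun s hs => ?_
  all_goals rw [interior_Icc] at hs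
  · exact (hasDerivAt_klBer_left hq.1.ne' hq.2.ne ⟨hq.1.trans hs.1, hs.2⟩).hasDerivWithinAt
  · exact sub_nonneg.2 ((logit_strictMonoOn.le_iff_le hq ⟨hq.1.trans hs.1, hs.2⟩).2 hs.1.le)

lemma klBer_antitoneOn {q : ℝ} (hq : q ∈ Ioo (0 : ℝ) 1) :
    AntitoneOn (klBer · q) (Icc 0 q) := by
  refine antitoneOn_of_hasDerivWithinAt_nonpos (f' := fun s => logit s - logit q)
    (convex_Icc 0 q)
    (continuous_klBer_left hq.1.ne' hq.2.ne).continuousOn (fun s hs => ?_) fun s hs => ?_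
  all_goals rw [interior_Icc] at hs
  · exact (hasDerivAt_klBer_left hq.1.ne' hq.2.ne ⟨hs.1, hs.2.trans hq.2⟩).hasDerivWithinAt
  · exact sub_nonpos.2 ((logit_strictMonoOn.le_iff_le ⟨hs.1, hs.2.trans hq.2⟩ hq).2 hs.2.le)

lemma klBer_sub_klBer {p q : ℝ} (x : ℝ) (hp : p ∈ Ioo (0 : ℝ) 1)
    (hq : q ∈ Ioo (0 : ℝ) 1) :
    klBer x p - klBer q p = klBer x q + (x - q) * (logit q - logit p) := by
  rw [klBer_eq x hp.1.ne' hp.2.ne, klBer_eq q hp.1.ne' hp.2.ne, klBer_eq x hq.1.ne' hq.2.ne,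
    binEntropy, binEntropy, logit, logit]
  simp only [log_inv]
  ring

lemma sq_sub_le_mul_klBer {q x B : ℝ} (hq : q ∈ Ioo (0 : ℝ) 1) (hx : x ∈ Icc (0 : ℝ) 1)
    (hB : 0 < B) (hbound : ∀ s ∈ uIcc q x, s * (1 - s) ≤ B) :
    (x - q) ^ 2 ≤ 2 * B * klBer x q := by
  have hsub : uIoo q x ⊆ Ioo 0 1 := uIoo_subset_Ioo (Ioo_subset_Icc_self hq) hx
  have key := le_of_mul_sub_hasDerivAt_nonneg (a := q) (x := x)
    (f := fun s => klBer s q - (s - q) ^ 2 / (2 * B))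
    (f' := fun s => logit s - logit q - (s - q) / B)
    ((continuous_klBer_left hq.1.ne' hq.2.ne).sub (by fun_prop)).continuousOn
    (fun s hs => by
      have h := (hasDerivAt_klBer_left hq.1.ne' hq.2.ne (hsub hs)).sub
        (((hasDerivAt_id' s).sub_const q).pow 2 |>.div_const (2 * B))
      refine h.congr_deriv ?_
      field_simp
      ring)
    (fun s hs => by
      obtain ⟨c, hc, hlogit⟩ := exists_logit_sub_eq hq (hsub hs)
      have hcx : c ∈ uIcc q x := uIcc_subset_uIcc_left (uIoo_subset_uIcc_self hs) hc
      have hc01 : c ∈ Ioo (0 : ℝ) 1 := ordConnected_Ioo.uIcc_subset hq (hsub hs) hc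
      have hcpos : 0 < c * (1 - c) := mul_pos hc01.1 (by linarith [hc01.2])
      have := div_le_div_of_nonneg_left (sq_nonneg (s - q)) hcpos (hbound c hcx)
      calc (0 : ℝ) ≤ (s - q) ^ 2 / (c * (1 - c)) - (s - q) ^ 2 / B := by linarith
        _ = (s - q) * (logit s - logit q - (s - q) / B) := by rw [hlogit]; ring)
  simp only [klBer_self, sub_self, zero_pow two_ne_zero, zero_div] at key
  rw [← div_le_iff₀' (by positivity)]
  linarith

lemma two_mul_sq_sub_le_klBer {p x : ℝ} (hp : p ∈ Ioo (0 : ℝ) 1)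
    (hx : x ∈ Icc (0 : ℝ) 1) :
    2 * (x - p) ^ 2 ≤ klBer x p := by
  have := sq_sub_le_mul_klBer hp hx (B := 1 / 4) (by norm_num)
    fun s _ => by nlinarith [sq_nonneg (s - 1 / 2)]
  linarith

lemma klBer_nonneg {q x : ℝ} (hq : q ∈ Ioo (0 : ℝ) 1) (hx : x ∈ Icc (0 : ℝ) 1) :
    0 ≤ klBer x q := by
  nlinarith [two_mul_sq_sub_le_klBer hq hx, sq_nonneg (x - q)]

lemma mul_one_sub_le_add_abs_sub {q : ℝ} (s : ℝ) (hq : q ∈ Icc (0 : ℝ) 1) :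
    s * (1 - s) ≤ q * (1 - q) + |s - q| := by
  rcases le_total q s with h | h
  · rw [abs_of_nonneg (sub_nonneg.2 h)]
    nlinarith [hq.1]
  · rw [abs_of_nonpos (sub_nonpos.2 h)]
    nlinarith [hq.2]

lemma sq_sub_le_klBer_mul {q x : ℝ} (hq : q ∈ Ioo (0 : ℝ) 1) (hx : x ∈ Icc (0 : ℝ) 1) :
    (x - q) ^ 2 ≤ 2 * (q * (1 - q) + |x - q|) * klBer x q :=
  sq_sub_le_mul_klBer hq hx (by nlinarith [hq.1, hq.2, abs_nonneg (x - q)]) fun s hs =>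
    (mul_one_sub_le_add_abs_sub s (Ioo_subset_Icc_self hq)).trans
      (by linarith [abs_sub_left_of_mem_uIcc hs])

lemma abs_sub_le_of_klBer_le {q x r : ℝ} (hq : q ∈ Ioo (0 : ℝ) 1) (hx : x ∈ Icc (0 : ℝ) 1)
    (hr : klBer x q ≤ r) :
    |x - q| ≤ √(2 * q * (1 - q) * r) + 2 * r := by
  have hv : 0 ≤ q * (1 - q) := mul_nonneg hq.1.le (by linarith [hq.2])
  have hr0 : 0 ≤ r := (klBer_nonneg hq hx).trans hr
  have hd2 : |x - q| ^ 2 ≤ 2 * (q * (1 - q) + |x - q|) * r := by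
    rw [sq_abs]
    exact (sq_sub_le_klBer_mul hq hx).trans (by gcongr)
  have hs := sq_sqrt (show 0 ≤ 2 * q * (1 - q) * r by nlinarith)
  nlinarith [sqrt_nonneg (2 * q * (1 - q) * r), abs_nonneg (x - q)]

noncomputable def klDeviationBound (p q r : ℝ) : ℝ :=
  √(q * (1 - q) * klBer q p) / min (p * (1 - p)) (q * (1 - q)) * √r +
    (1 + √(2 * klBer q p) / min (p * (1 - p)) (q * (1 - q))) * r

lemma abs_klBer_sub_klBer_le {p q x r : ℝ} (hp : p ∈ Ioo (0 : ℝ) 1)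
    (hq : q ∈ Ioo (0 : ℝ) 1) (hx : x ∈ Icc (0 : ℝ) 1) (hr : klBer x q ≤ r) :
    |klBer x p - klBer q p| ≤ klDeviationBound p q r := by
  set m := min (p * (1 - p)) (q * (1 - q))
  have hm : 0 < m :=
    lt_min (mul_pos hp.1 (by linarith [hp.2])) (mul_pos hq.1 (by linarith [hq.2]))
  have hpinsker := two_mul_sq_sub_le_klBer hp (Ioo_subset_Icc_self hq)
  have hr0 : 0 ≤ r := (klBer_nonneg hq hx).trans hr
  have h1 : √(2 * q * (1 - q) * r) * |q - p| ≤ √(q * (1 - q) * klBer q p) * √r := by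
    rw [← sqrt_sq_eq_abs, ← sqrt_mul' _ (sq_nonneg _), ← sqrt_mul' _ hr0]
    refine sqrt_le_sqrt ?_
    have hv : 0 ≤ q * (1 - q) := mul_nonneg hq.1.le (by linarith [hq.2])
    nlinarith [mul_le_mul_of_nonneg_left hpinsker (mul_nonneg hv hr0)]
  have h2 : 2 * |q - p| ≤ √(2 * klBer q p) := by
    rw [le_sqrt (by positivity) (by nlinarith), mul_pow, sq_abs]
    linarith
  calc |klBer x p - klBer q p| = |klBer x q + (x - q) * (logit q - logit p)| := by
        rw [klBer_sub_klBer x hp hq]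
    _ ≤ r + |x - q| * (|q - p| / m) := by
        refine (abs_add_le _ _).trans (add_le_add ?_ ?_)
        · rwa [abs_of_nonneg (klBer_nonneg hq hx)]
        · rw [abs_mul]
          exact mul_le_mul_of_nonneg_left (abs_logit_sub_le hp hq) (abs_nonneg _)
    _ ≤ r + (√(2 * q * (1 - q) * r) + 2 * r) * (|q - p| / m) := by
        gcongr
        exact abs_sub_le_of_klBer_le hq hx hr
    _ = r + (√(2 * q * (1 - q) * r) * |q - p| + r * (2 * |q - p|)) / m := by ring
    _ ≤ r + (√(q * (1 - q) * klBer q p) * √r + r * √(2 * klBer q p)) / m := by gcongr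
    _ = klDeviationBound p q r := by rw [klDeviationBound]; ring

instance (q : ℝ) : IsFiniteMeasure (bern q) :=
  ⟨by simp [bern]⟩

lemma isProbabilityMeasure_bern {q : ℝ} (hq0 : 0 ≤ q) (hq1 : q ≤ 1) :
    IsProbabilityMeasure (bern q) :=
  ⟨by simp [bern, ← ENNReal.ofReal_add hq0 (sub_nonneg.2 hq1)]⟩

lemma integrable_bern (q : ℝ) (f : ℝ → ℝ) : Integrable f (bern q) :=
  ((integrable_dirac (by simp)).smul_measure ENNReal.ofReal_ne_top).add_measure
    ((integrable_dirac (by simp)).smul_measure ENNReal.ofReal_ne_top)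

lemma integral_bern {q : ℝ} (hq0 : 0 ≤ q) (hq1 : q ≤ 1) (f : ℝ → ℝ) :
    ∫ y, f y ∂bern q = q * f 1 + (1 - q) * f 0 := by
  rw [bern, integral_add_measure
      ((integrable_dirac (by simp)).smul_measure ENNReal.ofReal_ne_top)
      ((integrable_dirac (by simp)).smul_measure ENNReal.ofReal_ne_top),
    integral_smul_measure, integral_smul_measure, integral_dirac, integral_dirac,
    ENNReal.toReal_ofReal hq0, ENNReal.toReal_ofReal (sub_nonneg.2 hq1), smul_eq_mul,
    smul_eq_mul]

lemma ae_bern_mem_Icc (q : ℝ) : ∀ᵐ y ∂bern q, y ∈ Icc (0 : ℝ) 1 :=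
  ae_add_measure_iff.2 ⟨Measure.ae_smul_measure (by simp [ae_dirac_eq]) _,
    Measure.ae_smul_measure (by simp [ae_dirac_eq]) _⟩

lemma mgf_sum_pi {ι : Type*} [Fintype ι] (μ : Measure ℝ) [SigmaFinite μ] (t : ℝ) :
    mgf (fun f : ι → ℝ => ∑ i, f i) (Measure.pi fun _ => μ) t =
      mgf id μ t ^ Fintype.card ι := by
  simp only [mgf, Finset.mul_sum, exp_sum, id]
  exact integral_fintype_prod_eq_pow (fun y => exp (t * y))

lemma integrable_exp_mul_sum_pi_bern (ι : Type*) [Fintype ι] (q t : ℝ) :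
    Integrable (fun f : ι → ℝ => exp (t * ∑ i, f i)) (Measure.pi fun _ => bern q) := by
  simp only [Finset.mul_sum, exp_sum]
  exact Integrable.fintype_prod (f := fun _ y => exp (t * y)) fun _ => integrable_bern q _

lemma mgf_bern {q : ℝ} (hq0 : 0 ≤ q) (hq1 : q ≤ 1) (t : ℝ) :
    mgf id (bern q) t = q * exp t + (1 - q) := by
  simp [mgf, integral_bern hq0 hq1]

-- `logit a - logit q` is the Chernoff parameter that is optimal for the threshold `a`.
lemma exp_mul_mgf_bern_logit {q a : ℝ} (hq : q ∈ Ioo (0 : ℝ) 1) (ha : a ∈ Ioo (0 : ℝ) 1) :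
    exp (-(logit a - logit q) * a) * mgf id (bern q) (logit a - logit q) =
      exp (-klBer a q) := by
  have hq0 : q ≠ 0 := hq.1.ne'
  have hq1 : 1 - q ≠ 0 := by linarith [hq.2]
  have ha1 : 1 - a ≠ 0 := by linarith [ha.2]
  have hmgf : mgf id (bern q) (logit a - logit q) = exp (log (1 - q) - log (1 - a)) := by
    rw [mgf_bern hq.1.le hq.2.le, logit, logit, exp_sub, exp_sub, exp_sub, exp_sub,
      exp_log hq.1, exp_log ha.1, exp_log (sub_pos.2 hq.2), exp_log (sub_pos.2 ha.2)]
    field_simp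
    ring
  rw [hmgf, ← exp_add, klBer_eq a hq.1.ne' hq.2.ne, binEntropy, logit, logit]
  simp only [log_inv]
  congr 1
  ring

lemma exp_mul_mgf_sum_pi_bern_logit {q a : ℝ} (hq : q ∈ Ioo (0 : ℝ) 1)
    (ha : a ∈ Ioo (0 : ℝ) 1) (k : ℕ) :
    exp (-(logit a - logit q) * (k * a)) *
        mgf (fun f : Fin k → ℝ => ∑ i, f i) (Measure.pi fun _ => bern q) (logit a - logit q) =
      exp (-(k * klBer a q)) := by
  have h := congrArg (· ^ k) (exp_mul_mgf_bern_logit hq ha)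
  simp only [mul_pow, ← exp_nat_mul] at h
  rw [mgf_sum_pi, Fintype.card_fin, mul_left_comm, neg_mul_eq_mul_neg (k : ℝ)]
  exact h

noncomputable def sampleMean {k : ℕ} (f : Fin k → ℝ) : ℝ := (∑ i, f i) / k

lemma ae_pi_bern_sampleMean_mem_Icc (q : ℝ) {k : ℕ} (hk : (0 : ℝ) < k) :
    ∀ᵐ f ∂(Measure.pi fun _ : Fin k => bern q), sampleMean f ∈ Icc (0 : ℝ) 1 := by
  filter_upwards [Filter.eventually_all.2 fun i : Fin k =>
    Measure.tendsto_eval_ae_ae.eventually (ae_bern_mem_Icc q)] with f hf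
  refine ⟨div_nonneg (Finset.sum_nonneg fun i _ => (hf i).1) hk.le,
    div_le_one_of_le₀ ?_ hk.le⟩
  simpa using Finset.sum_le_sum fun i (_ : i ∈ Finset.univ) => (hf i).2

lemma pi_bern_upper_tail_le {q a : ℝ} (hq : q ∈ Ioo (0 : ℝ) 1) (ha : a ∈ Ioo q 1)
    (k : ℕ) :
    (Measure.pi fun _ : Fin k => bern q) {f | k * a ≤ ∑ i, f i} ≤
      ENNReal.ofReal (exp (-(k * klBer a q))) := by
  have ha' : a ∈ Ioo (0 : ℝ) 1 := ⟨hq.1.trans ha.1, ha.2⟩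
  have ht : 0 ≤ logit a - logit q :=
    sub_nonneg.2 ((logit_strictMonoOn.le_iff_le hq ha').2 ha.1.le)
  have := isProbabilityMeasure_bern hq.1.le hq.2.le
  rw [← exp_mul_mgf_sum_pi_bern_logit hq ha' k, ← ENNReal.ofReal_toReal (measure_ne_top _ _)]
  exact ENNReal.ofReal_le_ofReal
    (measure_ge_le_exp_mul_mgf _ ht (integrable_exp_mul_sum_pi_bern _ q _))

lemma pi_bern_lower_tail_le {q a : ℝ} (hq : q ∈ Ioo (0 : ℝ) 1) (ha : a ∈ Ioo 0 q)
    (k : ℕ) :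
    (Measure.pi fun _ : Fin k => bern q) {f | ∑ i, f i ≤ k * a} ≤
      ENNReal.ofReal (exp (-(k * klBer a q))) := by
  have ha' : a ∈ Ioo (0 : ℝ) 1 := ⟨ha.1, ha.2.trans hq.2⟩
  have ht : logit a - logit q ≤ 0 :=
    sub_nonpos.2 ((logit_strictMonoOn.le_iff_le ha' hq).2 ha.2.le)
  have := isProbabilityMeasure_bern hq.1.le hq.2.le
  rw [← exp_mul_mgf_sum_pi_bern_logit hq ha' k, ← ENNReal.ofReal_toReal (measure_ne_top _ _)]
  exact ENNReal.ofReal_le_ofReal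
    (measure_le_le_exp_mul_mgf _ ht (integrable_exp_mul_sum_pi_bern _ q _))

lemma pi_bern_klBer_upper_tail_le {q r : ℝ} (hq : q ∈ Ioo (0 : ℝ) 1) {k : ℕ}
    (hk : (0 : ℝ) < k) (hr : 0 < r) :
    (Measure.pi fun _ : Fin k => bern q)
        {f | sampleMean f ∈ Icc q 1 ∧ r < klBer (sampleMean f) q} ≤
      ENNReal.ofReal (exp (-(k * r))) := by
  by_cases h1 : klBer 1 q ≤ r
  · refine (measure_mono_null (t := ∅) (fun f hf => ?_) measure_empty).trans_le
      (by positivity)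
    exact (((klBer_monotoneOn hq) hf.1 ⟨hq.2.le, le_rfl⟩ hf.1.2).trans h1).not_gt hf.2
  obtain ⟨a, ha, rfl⟩ := intermediate_value_Ioo hq.2.le
    (continuous_klBer_left hq.1.ne' hq.2.ne).continuousOn
    (show r ∈ Ioo (klBer q q) (klBer 1 q) from ⟨(klBer_self q).symm ▸ hr, not_le.1 h1⟩)
  refine (measure_mono fun f hf => ?_).trans (pi_bern_upper_tail_le hq ha k)
  have := (klBer_monotoneOn hq).reflect_lt (Ioo_subset_Icc_self ha) hf.1 hf.2
  exact (le_div_iff₀' hk).1 this.le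

lemma pi_bern_klBer_lower_tail_le {q r : ℝ} (hq : q ∈ Ioo (0 : ℝ) 1) {k : ℕ}
    (hk : (0 : ℝ) < k) (hr : 0 < r) :
    (Measure.pi fun _ : Fin k => bern q)
        {f | sampleMean f ∈ Icc 0 q ∧ r < klBer (sampleMean f) q} ≤
      ENNReal.ofReal (exp (-(k * r))) := by
  by_cases h0 : klBer 0 q ≤ r
  · refine (measure_mono_null (t := ∅) (fun f hf => ?_) measure_empty).trans_le
      (by positivity)
    exact (((klBer_antitoneOn hq) ⟨le_rfl, hq.1.le⟩ hf.1 hf.1.1).trans h0).not_gt hf.2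
  obtain ⟨a, ha, rfl⟩ := intermediate_value_Ioo' hq.1.le
    (continuous_klBer_left hq.1.ne' hq.2.ne).continuousOn
    (show r ∈ Ioo (klBer q q) (klBer 0 q) from ⟨(klBer_self q).symm ▸ hr, not_le.1 h0⟩)
  refine (measure_mono fun f hf => ?_).trans (pi_bern_lower_tail_le hq ha k)
  have := (klBer_antitoneOn hq).reflect_lt (Ioo_subset_Icc_self ha) hf.1 hf.2
  exact (div_le_iff₀' hk).1 this.le

lemma pi_bern_klBer_tail_le {q r : ℝ} (hq : q ∈ Ioo (0 : ℝ) 1) {k : ℕ} (hk : (0 : ℝ) < k)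
    (hr : 0 < r) :
    (Measure.pi fun _ : Fin k => bern q) {f | r < klBer (sampleMean f) q} ≤
      ENNReal.ofReal (2 * exp (-(k * r))) := by
  set μ := Measure.pi fun _ : Fin k => bern q
  calc μ {f | r < klBer (sampleMean f) q}
      ≤ μ ({f | sampleMean f ∈ Icc q 1 ∧ r < klBer (sampleMean f) q} ∪
          {f | sampleMean f ∈ Icc 0 q ∧ r < klBer (sampleMean f) q}) := by
        refine measure_mono_ae ?_
        filter_upwards [ae_pi_bern_sampleMean_mem_Icc q hk] with f hf hlt
        rcases le_total q (sampleMean f) with h | h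
        exacts [Or.inl ⟨⟨h, hf.2⟩, hlt⟩, Or.inr ⟨⟨hf.1, h⟩, hlt⟩]
    _ ≤ ENNReal.ofReal (exp (-(k * r))) + ENNReal.ofReal (exp (-(k * r))) :=
        (measure_union_le _ _).trans (add_le_add (pi_bern_klBer_upper_tail_le hq hk hr)
          (pi_bern_klBer_lower_tail_le hq hk hr))
    _ = ENNReal.ofReal (2 * exp (-(k * r))) := by
        rw [← ENNReal.ofReal_add (exp_pos _).le (exp_pos _).le, two_mul]

lemma pi_bern_abs_klBer_sub_tail_le {p q r : ℝ} (hp : p ∈ Ioo (0 : ℝ) 1)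
    (hq : q ∈ Ioo (0 : ℝ) 1) {k : ℕ} (hk : (0 : ℝ) < k) (hr : 0 < r) :
    (Measure.pi fun _ : Fin k => bern q)
        {f | |klBer (sampleMean f) p - klBer q p| ≤ klDeviationBound p q r}ᶜ ≤
      ENNReal.ofReal (2 * exp (-(k * r))) := by
  refine (measure_mono_ae ?_).trans (pi_bern_klBer_tail_le hq hk hr)
  filter_upwards [ae_pi_bern_sampleMean_mem_Icc q hk] with f hf hbad
  exact lt_of_not_ge fun hle => hbad (abs_klBer_sub_klBer_le hp hq hf hle)

lemma one_sub_measure_compl_le_measure_preimage {Ω α : Type*} [MeasurableSpace Ω]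
    [MeasurableSpace α] {P : Measure Ω} [IsProbabilityMeasure P] {μ : Measure α} [NeZero μ]
    {T : Ω → α} (hT : P.map T = μ) (S : Set α) :
    1 - μ Sᶜ ≤ P (T ⁻¹' S) := by
  have hTm : AEMeasurable T P := .of_map_ne_zero (hT ▸ NeZero.ne μ)
  calc 1 - μ Sᶜ ≤ 1 - P (T ⁻¹' Sᶜ) :=
        tsub_le_tsub_left (hT ▸ Measure.le_map_apply hTm Sᶜ) 1
    _ ≤ P (T ⁻¹' S) := by
        rw [tsub_le_iff_right, ← measure_univ (μ := P), preimage_compl]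
        exact measure_univ_le_add_compl _

/-- KL-based perturbed Bernoulli concentration bound. -/
theorem stmt15 (q p : ℝ) (hq : q ∈ Set.Ioo (0 : ℝ) 1) (hp : p ∈ Set.Ioo (0 : ℝ) 1)
    (k : ℕ) (hk : 1 ≤ k)
    {Ω : Type*} [MeasurableSpace Ω] (P : Measure Ω) [IsProbabilityMeasure P]
    (x : Fin k → Ω → ℝ)
    (hlaw : Measure.map (fun ω => fun i => x i ω) P = Measure.pi fun _ : Fin k => bern q)
    (δ : ℝ) (hδ : δ ∈ Set.Ioo (0 : ℝ) 1) :
    ENNReal.ofReal (1 - δ) ≤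
      P {ω | |klBer ((∑ i, x i ω) / k) p - klBer q p| ≤
        Real.sqrt (q * (1 - q) * klBer q p) / min (p * (1 - p)) (q * (1 - q)) *
          Real.sqrt (Real.log (4 / δ) / k) +
        (1 + Real.sqrt (2 * klBer q p) / min (p * (1 - p)) (q * (1 - q))) *
          (Real.log (4 / δ) / k)} := by
  have hk0 : (0 : ℝ) < k := by exact_mod_cast hk
  have hlog : 0 < log (4 / δ) := log_pos ((one_lt_div hδ.1).2 (by linarith [hδ.2]))
  have htail : 2 * exp (-(k * (log (4 / δ) / k))) = δ / 2 := by
    rw [mul_div_cancel₀ _ hk0.ne', exp_neg, exp_log (div_pos four_pos hδ.1), inv_div]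
    ring
  have := isProbabilityMeasure_bern hq.1.le hq.2.le
  refine le_trans ?_ (one_sub_measure_compl_le_measure_preimage hlaw
    {f | |klBer (sampleMean f) p - klBer q p| ≤ klDeviationBound p q (log (4 / δ) / k)})
  rw [ENNReal.ofReal_sub _ hδ.1.le, ENNReal.ofReal_one]
  gcongr
  refine (pi_bern_abs_klBer_sub_tail_le hp hq hk0 (div_pos hlog hk0)).trans
    (ENNReal.ofReal_le_ofReal ?_)
  linarith [hδ.1]
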